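/- Fix a constant c > 0 and consider the biloop transform ψ_biloop : ℝ → ℝ². Then ψ_biloop is injective, continuous, bounded, and redescending, i.e. ψ_biloop(x) → (0,0) as |x| → ∞. -/
import Mathlib


open Real Filter

lemma tanh_formula (x : ℝ) : Real.tanh x = 1 - 2 / (Real.exp (2*x) + 1) := by
  have h2 : Real.exp (2*x) = Real.exp x * Real.exp x := by rw [two_mul, Real.exp_add]
  have hx := Real.exp_pos x
  rw [Real.tanh_eq_sinh_div_cosh, Real.sinh_eq, Real.cosh_eq, Real.exp_neg, h2]
  have hd : (Real.exp x + (Real.exp x)⁻¹) ≠ 0 := by positivity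
  field_simp
  ring

lemma tanh_lt_one' (x : ℝ) : Real.tanh x < 1 := by
  rw [tanh_formula]
  have : 0 < 2 / (Real.exp (2*x) + 1) := by positivity
  linarith

lemma neg_one_lt_tanh' (x : ℝ) : -1 < Real.tanh x := by
  rw [tanh_formula]
  have he := Real.exp_pos (2*x)
  have : 2 / (Real.exp (2*x) + 1) < 2 := by
    rw [div_lt_iff₀ (by positivity)]; nlinarith
  linarith

lemma tanh_inj' : Function.Injective Real.tanh := by
  intro x y h
  rw [tanh_formula, tanh_formula] at h
  have hx := Real.exp_pos (2*x); have hy := Real.exp_pos (2*y)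
  have : Real.exp (2*x) = Real.exp (2*y) := by
    field_simp at h; linarith
  have := Real.exp_injective this
  linarith

lemma tanh_nonneg' {x : ℝ} (hx : 0 ≤ x) : 0 ≤ Real.tanh x := by
  rw [tanh_formula]
  have h1 : (1:ℝ) ≤ Real.exp (2*x) := Real.one_le_exp (by linarith)
  have : 2 / (Real.exp (2*x) + 1) ≤ 1 := by
    rw [div_le_one (by positivity)]; linarith
  linarith

lemma tanh_neg' {x : ℝ} (hx : x < 0) : Real.tanh x < 0 := by
  rw [tanh_formula]
  have h1 : Real.exp (2*x) < 1 := by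
    rw [Real.exp_lt_one_iff]; linarith
  have he := Real.exp_pos (2*x)
  have : 1 < 2 / (Real.exp (2*x) + 1) := by
    rw [lt_div_iff₀ (by positivity)]; linarith
  linarith

lemma continuous_tanh' : Continuous Real.tanh := by
  have : Real.tanh = fun x => Real.sinh x / Real.cosh x := by
    funext x; exact Real.tanh_eq_sinh_div_cosh x
  rw [this]
  exact Real.continuous_sinh.div Real.continuous_cosh fun x => (Real.cosh_pos x).ne'

lemma tendsto_tanh_atTop' : Tendsto Real.tanh atTop (nhds 1) := by
  have h : Tendsto (fun x => Real.exp (2*x) + 1) atTop atTop := by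
    apply Filter.tendsto_atTop_add_const_right
    exact Real.tendsto_exp_atTop.comp (tendsto_id.const_mul_atTop two_pos)
  have h2 : Tendsto (fun x => 2 / (Real.exp (2*x) + 1)) atTop (nhds 0) :=
    Filter.Tendsto.div_atTop tendsto_const_nhds h
  have := (tendsto_const_nhds (x := (1:ℝ)) (f := atTop)).sub h2
  simp only [sub_zero] at this
  exact this.congr fun x => (tanh_formula x).symm

lemma tendsto_tanh_atBot' : Tendsto Real.tanh atBot (nhds (-1)) := by
  have : Real.tanh = fun x => -Real.tanh (-x) := by
    funext x; rw [Real.tanh_neg, neg_neg]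
  rw [this]
  have := (tendsto_tanh_atTop'.comp tendsto_neg_atBot_atTop).neg
  simpa using this

lemma angle_eq' (a b : ℝ) (h : |a - b| < 2*π) (hcos : Real.cos a = Real.cos b)
    (hsin : Real.sin a = Real.sin b) : a = b := by
  have he : Complex.exp (a * Complex.I) = Complex.exp (b * Complex.I) := by
    rw [Complex.exp_mul_I, Complex.exp_mul_I]
    push_cast [← Complex.ofReal_cos, ← Complex.ofReal_sin, hcos, hsin]
    rfl
  rw [Complex.exp_eq_exp_iff_exists_int] at he
  obtain ⟨n, hn⟩ := he
  have hab : a = b + n * (2*π) := by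
    have : (a : ℂ) * Complex.I = ((b + n * (2*π) : ℝ) : ℂ) * Complex.I := by
      push_cast; rw [hn]; ring
    have := mul_right_cancel₀ Complex.I_ne_zero this
    exact_mod_cast this
  have hπ := Real.pi_pos
  have hn0 : n = 0 := by
    by_contra h0
    have : (1:ℝ) ≤ |(n:ℝ)| := by
      exact_mod_cast Int.one_le_abs (by omega)
    have : 2*π ≤ |(n:ℝ) * (2*π)| := by
      rw [abs_mul, abs_of_pos (by linarith : (0:ℝ) < 2*π)]; nlinarith
    rw [hab] at h
    simp only [add_sub_cancel_left] at h
    linarith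
  rw [hab, hn0]; push_cast; ring

/-- The biloop transform `ψ_biloop : ℝ → ℝ²` with tuning constant `c`:
`x ↦ (u(x), v(x))` where `u(x) = c·(1 + cos(2π·tanh(x/c) + π))` for `x ≥ 0`,
`u(x) = −c·(1 + cos(2π·tanh(x/c) − π))` for `x < 0`, and
`v(x) = sin(2π·tanh(x/c))`. -/
noncomputable def biloop (c : ℝ) (x : ℝ) : ℝ × ℝ :=
  (if 0 ≤ x then c * (1 + Real.cos (2 * Real.pi * Real.tanh (x / c) + Real.pi))
    else -c * (1 + Real.cos (2 * Real.pi * Real.tanh (x / c) - Real.pi)),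
   Real.sin (2 * Real.pi * Real.tanh (x / c)))

/-- for `c > 0`, the biloop transform is injective, continuous, bounded,
and redescending: `ψ_biloop(x) → (0,0)` as `|x| → ∞`. -/
theorem biloop_injective_continuous_bounded_redescending (c : ℝ) (hc : 0 < c) :
    Function.Injective (biloop c) ∧
    Continuous (biloop c) ∧
    (∃ M : ℝ, 0 < M ∧ ∀ x : ℝ, ‖biloop c x‖ ≤ M) ∧
    Tendsto (biloop c) (Filter.cocompact ℝ) (nhds ((0 : ℝ), (0 : ℝ))) := by
  have hπ := Real.pi_pos
  -- bounds for θ x := 2π tanh (x/c)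
  have hub : ∀ x : ℝ, 2 * π * Real.tanh (x / c) < 2 * π := fun x => by
    have := tanh_lt_one' (x / c); nlinarith
  have hlb : ∀ x : ℝ, -(2 * π) < 2 * π * Real.tanh (x / c) := fun x => by
    have := neg_one_lt_tanh' (x / c); nlinarith
  have hsgn : ∀ x : ℝ, 0 ≤ x → 0 ≤ 2 * π * Real.tanh (x / c) := fun x hx => by
    have := tanh_nonneg' (div_nonneg hx hc.le); positivity
  have hsgn' : ∀ x : ℝ, x < 0 → 2 * π * Real.tanh (x / c) < 0 := fun x hx => by
    have := tanh_neg' (div_neg_of_neg_of_pos hx hc); nlinarith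
  have hθeq : ∀ x y : ℝ, 2 * π * Real.tanh (x / c) = 2 * π * Real.tanh (y / c) → x = y := by
    intro x y h
    have h2 : Real.tanh (x / c) = Real.tanh (y / c) :=
      mul_left_cancel₀ (by positivity : (2 : ℝ) * π ≠ 0) h
    have h3 := tanh_inj' h2
    field_simp at h3
    exact h3
  refine ⟨?_, ?_, ?_, ?_⟩
  · -- injectivity
    intro x y hxy
    have hfst := congrArg Prod.fst hxy
    have hsnd := congrArg Prod.snd hxy
    simp only [biloop] at hfst hsnd
    set a := 2 * π * Real.tanh (x / c) with ha
    set b := 2 * π * Real.tanh (y / c) with hb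
    rcases le_or_gt 0 x with hx | hx <;> rcases le_or_gt 0 y with hy | hy
    · rw [if_pos hx, if_pos hy] at hfst
      have h1 : Real.cos (a + π) = Real.cos (b + π) := by
        have := mul_left_cancel₀ hc.ne' hfst; linarith
      rw [Real.cos_add_pi, Real.cos_add_pi, neg_inj] at h1
      have hab : a = b := by
        apply angle_eq' a b _ h1 hsnd
        rw [abs_sub_lt_iff]
        have := hub x; have := hub y; have := hsgn x hx; have := hsgn y hy
        constructor <;> linarith
      exact hθeq _ _ hab
    · exfalso
      rw [if_pos hx, if_neg (not_le.mpr hy)] at hfst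
      rw [Real.cos_add_pi, Real.cos_sub_pi] at hfst
      have hca := Real.cos_le_one a
      have hcb := Real.cos_le_one b
      have hzero : Real.cos b = 1 := by nlinarith
      rw [Real.cos_eq_one_iff_of_lt_of_lt (hlb y) (hub y)] at hzero
      have := hsgn' y hy
      linarith
    · exfalso
      rw [if_neg (not_le.mpr hx), if_pos hy] at hfst
      rw [Real.cos_add_pi, Real.cos_sub_pi] at hfst
      have hca := Real.cos_le_one a
      have hcb := Real.cos_le_one b
      have hzero : Real.cos a = 1 := by nlinarith
      rw [Real.cos_eq_one_iff_of_lt_of_lt (hlb x) (hub x)] at hzero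
      have := hsgn' x hx
      linarith
    · rw [if_neg (not_le.mpr hx), if_neg (not_le.mpr hy)] at hfst
      have h1 : Real.cos (a - π) = Real.cos (b - π) := by
        have : -c ≠ 0 := neg_ne_zero.mpr hc.ne'
        have := mul_left_cancel₀ this hfst; linarith
      rw [Real.cos_sub_pi, Real.cos_sub_pi, neg_inj] at h1
      have hab : a = b := by
        apply angle_eq' a b _ h1 hsnd
        rw [abs_sub_lt_iff]
        have := hlb x; have := hlb y; have := hsgn' x hx; have := hsgn' y hy
        constructor <;> linarith
      exact hθeq _ _ hab
  · -- continuity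
    have hθ : Continuous fun x : ℝ => 2 * π * Real.tanh (x / c) :=
      continuous_const.mul (continuous_tanh'.comp (continuous_id.div_const c))
    unfold biloop
    apply Continuous.prodMk
    · apply Continuous.if_le
      · exact continuous_const.mul (continuous_const.add
          (Real.continuous_cos.comp (hθ.add continuous_const)))
      · exact continuous_const.mul (continuous_const.add
          (Real.continuous_cos.comp (hθ.sub continuous_const)))
      · exact continuous_const
      · exact continuous_id
      · intro x hx
        rw [← hx]
        norm_num [Real.tanh_zero, Real.cos_pi]
    · exact Real.continuous_sin.comp hθ
  · -- boundedness
    refine ⟨2 * c + 1, by linarith, fun x => ?_⟩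
    rw [Prod.norm_def]
    apply max_le
    · simp only [biloop, Real.norm_eq_abs]
      have h1 := Real.cos_le_one (2 * π * Real.tanh (x / c) + π)
      have h2 := Real.neg_one_le_cos (2 * π * Real.tanh (x / c) + π)
      have h3 := Real.cos_le_one (2 * π * Real.tanh (x / c) - π)
      have h4 := Real.neg_one_le_cos (2 * π * Real.tanh (x / c) - π)
      rw [abs_le]
      split_ifs <;> constructor <;> nlinarith
    · simp only [biloop, Real.norm_eq_abs]
      have := abs_sin_le_one (2 * π * Real.tanh (x / c))
      linarith
  · -- redescending
    rw [cocompact_eq_atBot_atTop, tendsto_sup]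
    constructor
    · -- atBot
      have hdiv : Tendsto (fun x : ℝ => x / c) atBot atBot :=
        tendsto_id.atBot_div_const hc
      have ht : Tendsto (fun x : ℝ => Real.tanh (x / c)) atBot (nhds (-1)) :=
        tendsto_tanh_atBot'.comp hdiv
      have hg : Continuous fun t : ℝ =>
          ((-c * (1 + Real.cos (2 * π * t - π)), Real.sin (2 * π * t)) : ℝ × ℝ) := by
        fun_prop
      have hfinal := (hg.tendsto (-1)).comp ht
      have e2 : Real.cos (2 * π * (-1 : ℝ) - π) = -1 := by
        rw [show 2 * π * (-1 : ℝ) - π = -(π + 2 * π) by ring, Real.cos_neg,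
          Real.cos_add_two_pi, Real.cos_pi]
      have e3 : Real.sin (2 * π * (-1 : ℝ)) = 0 := by
        rw [show 2 * π * (-1 : ℝ) = -(2 * π) by ring, Real.sin_neg, Real.sin_two_pi, neg_zero]
      rw [show ((-c * (1 + Real.cos (2 * π * (-1 : ℝ) - π)), Real.sin (2 * π * (-1 : ℝ))) : ℝ × ℝ)
          = ((0 : ℝ), (0 : ℝ)) by rw [e2, e3]; norm_num] at hfinal
      apply hfinal.congr'
      filter_upwards [eventually_lt_atBot (0 : ℝ)] with x hx
      simp only [Function.comp, biloop, if_neg (not_le.mpr hx)]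
    · -- atTop
      have hdiv : Tendsto (fun x : ℝ => x / c) atTop atTop :=
        tendsto_id.atTop_div_const hc
      have ht : Tendsto (fun x : ℝ => Real.tanh (x / c)) atTop (nhds 1) :=
        tendsto_tanh_atTop'.comp hdiv
      have hg : Continuous fun t : ℝ =>
          ((c * (1 + Real.cos (2 * π * t + π)), Real.sin (2 * π * t)) : ℝ × ℝ) := by
        fun_prop
      have hfinal := (hg.tendsto 1).comp ht
      have e2 : Real.cos (2 * π * (1 : ℝ) + π) = -1 := by
        rw [show 2 * π * (1 : ℝ) + π = π + 2 * π by ring, Real.cos_add_two_pi, Real.cos_pi]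
      have e3 : Real.sin (2 * π * (1 : ℝ)) = 0 := by
        rw [mul_one, Real.sin_two_pi]
      rw [show ((c * (1 + Real.cos (2 * π * (1 : ℝ) + π)), Real.sin (2 * π * (1 : ℝ))) : ℝ × ℝ)
          = ((0 : ℝ), (0 : ℝ)) by rw [e2, e3]; norm_num] at hfinal
      apply hfinal.congr'
      filter_upwards [eventually_ge_atTop (0 : ℝ)] with x hx
      simp only [Function.comp, biloop, if_pos hx]
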